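/- arXiv:1509.00836 — 9 statements merged into one kernel-verified Lean document; each statement's English description precedes it below -/
import Mathlib

section
/- Let a > 0, b > 0, Te ∈ ℝ, D > 0. Suppose P : [0,D] → ℝ is continuous, monotone nondecreasing, and P(0) ≥ 0, and suppose T : [0,D] → ℝ is differentiable with T'(t) = a·P(t) − b·(T(t) − Te) on [0,D] and T(0) = Te. Then T is monotone nondecreasing on [0,D]. -/
open Real Set

/-!
Since `T' = a P - b (T - Te)`, it suffices to show `b (T t - Te) ≤ a P t`. Fix `t` and compare
`T` on `[0, t]` with the trajectory driven by the constant power `P t`: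
`φ s = a P t (exp (b s) - 1) - b exp (b s) (T s - Te)` has derivative
`a b exp (b s) (P t - P s) ≥ 0` and `φ 0 = 0`, so
`b exp (b t) (T t - Te) ≤ a P t (exp (b t) - 1) ≤ a P t exp (b t)`,
the last step because `P t ≥ P 0 ≥ 0`.
-/

theorem monotoneOn_of_hasDerivAt_nonneg {S : Set ℝ} (hS : Convex ℝ S) {f f' : ℝ → ℝ}
    (hf : ∀ x ∈ S, HasDerivAt f (f' x) x) (hf' : ∀ x ∈ S, 0 ≤ f' x) : MonotoneOn f S :=
  monotoneOn_of_hasDerivWithinAt_nonneg hS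
    (fun x hx => (hf x hx).continuousAt.continuousWithinAt)
    (fun x hx => (hf x (interior_subset hx)).hasDerivWithinAt)
    (fun x hx => hf' x (interior_subset hx))

section Relaxation

variable {a b Te : ℝ} {P T : ℝ → ℝ}

theorem hasDerivAt_relaxation_comparison {s p : ℝ}
    (hT : HasDerivAt T (a * p - b * (T s - Te)) s) (c : ℝ) :
    HasDerivAt (fun u => c * (exp (b * u) - 1) - b * exp (b * u) * (T u - Te))
      (b * exp (b * s) * (c - a * p)) s := by
  have hexp : HasDerivAt (fun u => exp (b * u)) (exp (b * s) * b) s := by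
    simpa using ((hasDerivAt_id s).const_mul b).exp
  exact (((hexp.sub_const 1).const_mul c).sub
    ((hexp.const_mul b).mul (hT.sub_const Te))).congr_deriv (by ring)

theorem mul_exp_mul_sub_le {t : ℝ} (ha : 0 ≤ a) (hb : 0 ≤ b) (ht : 0 ≤ t)
    (hPm : MonotoneOn P (Icc 0 t))
    (hT : ∀ s ∈ Icc 0 t, HasDerivAt T (a * P s - b * (T s - Te)) s) (h0 : T 0 = Te) :
    b * exp (b * t) * (T t - Te) ≤ a * P t * (exp (b * t) - 1) := by
  have ht_mem : t ∈ Icc 0 t := ⟨ht, le_rfl⟩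
  have hcomp : MonotoneOn
      (fun u => a * P t * (exp (b * u) - 1) - b * exp (b * u) * (T u - Te)) (Icc 0 t) :=
    monotoneOn_of_hasDerivAt_nonneg (convex_Icc 0 t)
      (fun s hs => hasDerivAt_relaxation_comparison (hT s hs) _)
      (fun s hs => by
        have hPs : a * P s ≤ a * P t := mul_le_mul_of_nonneg_left (hPm hs ht_mem hs.2) ha
        have : 0 ≤ b * exp (b * s) := by positivity
        nlinarith)
  have := hcomp ⟨le_rfl, ht⟩ ht_mem ht
  simp only [mul_zero, exp_zero, sub_self, h0] at this
  linarith

theorem mul_sub_le_of_hasDerivAt {D t : ℝ} (ha : 0 ≤ a) (hb : 0 ≤ b)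
    (hPm : MonotoneOn P (Icc 0 D)) (hP0 : 0 ≤ P 0)
    (hT : ∀ s ∈ Icc 0 D, HasDerivAt T (a * P s - b * (T s - Te)) s) (h0 : T 0 = Te)
    (ht : t ∈ Icc 0 D) :
    b * (T t - Te) ≤ a * P t := by
  have hsub : Icc 0 t ⊆ Icc 0 D := Icc_subset_Icc_right ht.2
  have hbound := mul_exp_mul_sub_le ha hb ht.1 (hPm.mono hsub) (fun s hs => hT s (hsub hs)) h0
  have hPt : 0 ≤ a * P t :=
    mul_nonneg ha (hP0.trans (hPm (left_mem_Icc.2 (ht.1.trans ht.2)) ht ht.1))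
  have hexp : 0 < exp (b * t) := exp_pos _
  nlinarith

end Relaxation

theorem stmt_6_general (a b Te D : ℝ) (ha : 0 < a) (hb : 0 < b)
    (P T : ℝ → ℝ)
    (hPm : MonotoneOn P (Set.Icc 0 D))
    (hP0 : 0 ≤ P 0)
    (hT : ∀ t ∈ Set.Icc (0:ℝ) D, HasDerivAt T (a * P t - b * (T t - Te)) t)
    (h0 : T 0 = Te) :
    MonotoneOn T (Set.Icc 0 D) :=
  monotoneOn_of_hasDerivAt_nonneg (convex_Icc 0 D) hT fun _ ht =>
    sub_nonneg.2 (mul_sub_le_of_hasDerivAt ha.le hb.le hPm hP0 hT h0 ht)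

theorem stmt_6 (a b Te D : ℝ) (ha : 0 < a) (hb : 0 < b) (hD : 0 < D)
    (P T : ℝ → ℝ)
    (hPc : ContinuousOn P (Set.Icc 0 D))
    (hPm : MonotoneOn P (Set.Icc 0 D))
    (hP0 : 0 ≤ P 0)
    (hT : ∀ t ∈ Set.Icc (0:ℝ) D, HasDerivAt T (a * P t - b * (T t - Te)) t)
    (h0 : T 0 = Te) :
    MonotoneOn T (Set.Icc 0 D) :=
  stmt_6_general a b Te D ha hb P T hPm hP0 hT h0
end

section
/- Let a > 0, b > 0, T_δ > 0, D > 0, and let P : [0,D] → ℝ be nonnegative and integrable with ∫_0^{t} a e^{bτ} P(τ) dτ ≤ T_δ e^{bt} for all t ∈ [0,D]. Suppose equality holds at some t_h ∈ (0,D], i.e., ∫_0^{t_h} a e^{bτ} P(τ) dτ = T_δ e^{b t_h}. Then ∫_t^{t_h} a e^{bτ} P(τ) dτ ≥ T_δ (e^{b t_h} − e^{bt}) for every t ∈ [0, t_h]; moreover, if P is left-continuous at t_h, then P(t_h) ≥ T_δ·b/a. -/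
open MeasureTheory Real Set Filter

theorem stmt_7 (a b Tδ D : ℝ) (ha : 0 < a) (hb : 0 < b) (hTδ : 0 < Tδ) (hD : 0 < D)
    (P : ℝ → ℝ) (hPnn : ∀ t ∈ Set.Icc (0:ℝ) D, 0 ≤ P t)
    (hPint : IntegrableOn P (Set.Icc 0 D))
    (hfeas : ∀ t ∈ Set.Icc (0:ℝ) D,
      (∫ τ in (0:ℝ)..t, a * Real.exp (b * τ) * P τ) ≤ Tδ * Real.exp (b * t))
    (t_h : ℝ) (ht_h : t_h ∈ Set.Ioc (0:ℝ) D)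
    (heq : (∫ τ in (0:ℝ)..t_h, a * Real.exp (b * τ) * P τ) = Tδ * Real.exp (b * t_h)) :
    (∀ t ∈ Set.Icc (0:ℝ) t_h,
      Tδ * (Real.exp (b * t_h) - Real.exp (b * t)) ≤ ∫ τ in t..t_h, a * Real.exp (b * τ) * P τ) ∧
    (Filter.Tendsto P (nhdsWithin t_h (Set.Iio t_h)) (nhds (P t_h)) → Tδ * b / a ≤ P t_h) := by
  obtain ⟨ht0, htD⟩ := ht_h
  set f : ℝ → ℝ := fun τ => a * Real.exp (b * τ) * P τ with hf
  have hfint : IntegrableOn f (Set.Icc 0 D) := by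
    have hc : ContinuousOn (fun τ => a * Real.exp (b * τ)) (Set.Icc 0 D) :=
      (continuous_const.mul (Real.continuous_exp.comp
        (continuous_const.mul continuous_id))).continuousOn
    exact hPint.continuousOn_mul hc isCompact_Icc
  have hii : ∀ u v : ℝ, u ∈ Set.Icc (0:ℝ) D → v ∈ Set.Icc (0:ℝ) D →
      IntervalIntegrable f volume u v := fun u v hu hv =>
    (hfint.mono_set (Set.uIcc_subset_Icc hu hv)).intervalIntegrable
  have hth_mem : t_h ∈ Set.Icc (0:ℝ) D := ⟨le_of_lt ht0, htD⟩
  -- Part 1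
  have part1 : ∀ t ∈ Set.Icc (0:ℝ) t_h,
      Tδ * (Real.exp (b * t_h) - Real.exp (b * t)) ≤ ∫ τ in t..t_h, f τ := by
    intro t ⟨ht0', htt⟩
    have htmem : t ∈ Set.Icc (0:ℝ) D := ⟨ht0', htt.trans htD⟩
    have hsplit : (∫ τ in (0:ℝ)..t, f τ) + (∫ τ in t..t_h, f τ) = ∫ τ in (0:ℝ)..t_h, f τ :=
      intervalIntegral.integral_add_adjacent_intervals
        (hii 0 t ⟨le_refl 0, hD.le⟩ htmem) (hii t t_h htmem hth_mem)
    have h1 := hfeas t htmem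
    have : (∫ τ in t..t_h, f τ) = Tδ * Real.exp (b * t_h) - (∫ τ in (0:ℝ)..t, f τ) := by
      rw [← heq, ← hsplit]; ring
    rw [this]
    have : Tδ * (Real.exp (b * t_h) - Real.exp (b * t))
        = Tδ * Real.exp (b * t_h) - Tδ * Real.exp (b * t) := by ring
    rw [this]
    linarith
  refine ⟨part1, ?_⟩
  intro hcont
  by_contra hlt
  push_neg at hlt
  have hPth : a * P t_h < Tδ * b := by
    have := (lt_div_iff₀ ha).mp hlt
    nlinarith
  set c : ℝ := (a * P t_h + Tδ * b) / 2 with hc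
  have hc1 : a * P t_h < c := by rw [hc]; linarith
  have hc2 : c < Tδ * b := by rw [hc]; linarith
  -- eventually a * P τ < c to the left of t_h
  have hev1 : ∀ᶠ τ in nhdsWithin t_h (Set.Iio t_h), a * P τ < c :=
    ((hcont.const_mul a).eventually_lt_const hc1)
  -- eventually c * exp(b t_h) < Tδ * b * exp(b τ)
  have hexp_t : Filter.Tendsto (fun τ => Tδ * b * Real.exp (b * τ))
      (nhdsWithin t_h (Set.Iio t_h)) (nhds (Tδ * b * Real.exp (b * t_h))) := by
    apply Filter.Tendsto.mono_left _ nhdsWithin_le_nhds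
    exact ((continuous_const.mul (Real.continuous_exp.comp
      (continuous_const.mul continuous_id))).tendsto t_h)
  have hev2 : ∀ᶠ τ in nhdsWithin t_h (Set.Iio t_h),
      c * Real.exp (b * t_h) < Tδ * b * Real.exp (b * τ) := by
    apply hexp_t.eventually_const_lt
    have : (0:ℝ) < Real.exp (b * t_h) := Real.exp_pos _
    nlinarith
  obtain ⟨l, hl, hIoo⟩ := mem_nhdsLT_iff_exists_Ioo_subset.mp (hev1.and hev2)
  set t : ℝ := (max l 0 + t_h) / 2 with htdef
  have hlt_th : max l 0 < t_h := max_lt hl ht0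
  have htgt : max l 0 < t := by rw [htdef]; linarith
  have htlt : t < t_h := by rw [htdef]; linarith
  have ht0' : 0 ≤ t := le_of_lt (lt_of_le_of_lt (le_max_right l 0) htgt)
  have htIoo : t ∈ Set.Ioo l t_h := ⟨lt_of_le_of_lt (le_max_left l 0) htgt, htlt⟩
  have htmemD : t ∈ Set.Icc (0:ℝ) D := ⟨ht0', htlt.le.trans htD⟩
  -- upper bound on the integral
  have hbound : ∀ τ ∈ Set.Icc t t_h, f τ ≤ c * Real.exp (b * t_h) := by
    intro τ ⟨hτ1, hτ2⟩
    have hτD : τ ∈ Set.Icc (0:ℝ) D := ⟨ht0'.trans hτ1, hτ2.trans htD⟩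
    have hPτ : 0 ≤ P τ := hPnn τ hτD
    have haPτ : a * P τ ≤ c := by
      rcases eq_or_lt_of_le hτ2 with h | h
      · rw [h]; exact hc1.le
      · exact (hIoo ⟨lt_of_le_of_lt (le_max_left l 0) (lt_of_lt_of_le htgt hτ1), h⟩).1.le
    have hexp : Real.exp (b * τ) ≤ Real.exp (b * t_h) :=
      Real.exp_le_exp.mpr (by nlinarith)
    calc f τ = Real.exp (b * τ) * (a * P τ) := by rw [hf]; ring
      _ ≤ Real.exp (b * t_h) * c := by
          apply mul_le_mul hexp haPτ (by positivity) (Real.exp_pos _).le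
      _ = c * Real.exp (b * t_h) := by ring
  have hint_ub : (∫ τ in t..t_h, f τ) ≤ c * Real.exp (b * t_h) * (t_h - t) := by
    calc (∫ τ in t..t_h, f τ) ≤ ∫ _ in t..t_h, c * Real.exp (b * t_h) :=
          intervalIntegral.integral_mono_on htlt.le (hii t t_h htmemD hth_mem)
            (intervalIntegrable_const) hbound
      _ = c * Real.exp (b * t_h) * (t_h - t) := by
          rw [intervalIntegral.integral_const, smul_eq_mul]; ring
  have hlb := part1 t ⟨ht0', htlt.le⟩
  -- exp(b t_h) - exp(b t) ≥ b * exp(b t) * (t_h - t)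
  have hconv : b * Real.exp (b * t) * (t_h - t) ≤ Real.exp (b * t_h) - Real.exp (b * t) := by
    have h1 : b * (t_h - t) + 1 ≤ Real.exp (b * (t_h - t)) := Real.add_one_le_exp _
    have h2 : Real.exp (b * t_h) = Real.exp (b * t) * Real.exp (b * (t_h - t)) := by
      rw [← Real.exp_add]; ring_nf
    have h3 : (0:ℝ) < Real.exp (b * t) := Real.exp_pos _
    nlinarith
  have hkey : Tδ * b * Real.exp (b * t) * (t_h - t) ≤ c * Real.exp (b * t_h) * (t_h - t) := by
    have : Tδ * (b * Real.exp (b * t) * (t_h - t)) ≤ Tδ * (Real.exp (b * t_h) - Real.exp (b * t)) :=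
      mul_le_mul_of_nonneg_left hconv hTδ.le
    calc Tδ * b * Real.exp (b * t) * (t_h - t) = Tδ * (b * Real.exp (b * t) * (t_h - t)) := by ring
      _ ≤ Tδ * (Real.exp (b * t_h) - Real.exp (b * t)) := this
      _ ≤ ∫ τ in t..t_h, f τ := hlb
      _ ≤ c * Real.exp (b * t_h) * (t_h - t) := hint_ub
  have hcancel : Tδ * b * Real.exp (b * t) ≤ c * Real.exp (b * t_h) :=
    le_of_mul_le_mul_right (by linarith [hkey]) (by linarith : (0:ℝ) < t_h - t)
  have := (hIoo htIoo).2
  linarith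
end

section
/- Let a > 0, b > 0, T_δ > 0, D > 0, and let P : [0,D] → ℝ be nonnegative, integrable, and satisfy ∫_0^{t} a e^{bτ} P(τ) dτ ≤ T_δ e^{bt} for all t ∈ [0,D]. Suppose t_h ∈ (0,D), P is continuous at t_h, and ∫_0^{t_h} a e^{bτ} P(τ) dτ = T_δ e^{b t_h}. Then P(t_h) = T_δ·b/a. -/
open MeasureTheory Real Set

theorem stmt_8 (a b Tδ D : ℝ) (ha : 0 < a) (hb : 0 < b) (hTδ : 0 < Tδ) (hD : 0 < D)
    (P : ℝ → ℝ) (hPnn : ∀ t ∈ Set.Icc (0:ℝ) D, 0 ≤ P t)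
    (hPint : IntegrableOn P (Set.Icc 0 D))
    (hfeas : ∀ t ∈ Set.Icc (0:ℝ) D,
      (∫ τ in (0:ℝ)..t, a * Real.exp (b * τ) * P τ) ≤ Tδ * Real.exp (b * t))
    (t_h : ℝ) (ht_h : t_h ∈ Set.Ioo (0:ℝ) D)
    (hcont : ContinuousAt P t_h)
    (heq : (∫ τ in (0:ℝ)..t_h, a * Real.exp (b * τ) * P τ) = Tδ * Real.exp (b * t_h)) :
    P t_h = Tδ * b / a := by
  set f : ℝ → ℝ := fun τ => a * Real.exp (b * τ) * P τ with hf
  have hIccNhds : Set.Icc (0:ℝ) D ∈ nhds t_h :=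
    Icc_mem_nhds ht_h.1 ht_h.2
  have hfInt : IntegrableOn f (Set.Icc 0 D) := by
    have hcont' : ContinuousOn (fun τ => a * Real.exp (b * τ)) (Set.Icc (0:ℝ) D) :=
      (continuous_const.mul (Real.continuous_exp.comp (continuous_const.mul continuous_id))).continuousOn
    exact hPint.continuousOn_mul hcont' isCompact_Icc
  have hII : IntervalIntegrable f volume 0 t_h := by
    apply IntegrableOn.intervalIntegrable
    apply hfInt.mono_set
    rw [Set.uIcc_of_le ht_h.1.le]
    exact Set.Icc_subset_Icc le_rfl ht_h.2.le
  have hmeas : StronglyMeasurableAtFilter f (nhds t_h) volume :=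
    ⟨Set.Icc 0 D, hIccNhds, hfInt.aestronglyMeasurable⟩
  have hcontf : ContinuousAt f t_h := by
    exact (continuousAt_const.mul ((Real.continuous_exp.comp
      (continuous_const.mul continuous_id)).continuousAt)).mul hcont
  have hderiv1 : HasDerivAt (fun t => ∫ τ in (0:ℝ)..t, f τ) (f t_h) t_h :=
    intervalIntegral.integral_hasDerivAt_right hII hmeas hcontf
  have hderiv2 : HasDerivAt (fun t => Tδ * Real.exp (b * t))
      (Tδ * (Real.exp (b * t_h) * b)) t_h := by
    have h1 : HasDerivAt (fun t : ℝ => b * t) b t_h := by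
      simpa using (hasDerivAt_id t_h).const_mul b
    exact (h1.exp).const_mul Tδ
  have hF : HasDerivAt (fun t => (∫ τ in (0:ℝ)..t, f τ) - Tδ * Real.exp (b * t))
      (f t_h - Tδ * (Real.exp (b * t_h) * b)) t_h := hderiv1.sub hderiv2
  have hmax : IsLocalMax (fun t => (∫ τ in (0:ℝ)..t, f τ) - Tδ * Real.exp (b * t)) t_h := by
    filter_upwards [hIccNhds] with t ht
    have := hfeas t ht
    simp only [hf]
    rw [heq]
    linarith
  have hzero := hmax.hasDerivAt_eq_zero hF
  have hexp : Real.exp (b * t_h) ≠ 0 := (Real.exp_pos _).ne'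
  have : a * Real.exp (b * t_h) * P t_h = Tδ * (Real.exp (b * t_h) * b) := by
    simpa [hf, sub_eq_zero] using hzero
  have he := Real.exp_pos (b * t_h)
  have h2 : a * P t_h = Tδ * b := by
    have := mul_right_cancel₀ hexp (by ring_nf; ring_nf at this; linarith : 
      (a * P t_h) * Real.exp (b * t_h) = (Tδ * b) * Real.exp (b * t_h))
    exact this
  field_simp
  linarith
end

section
/- Fix a > 0, b > 0, T_δ > 0, deadline D > 0, arrival instants 0 = s_0 < s_1 < ... < s_N < D and energies E_0,...,E_N ≥ 0, and let P : [0,D] → ℝ be feasible (nonnegative, measurable, and satisfying ∫_0^{t} a e^{bτ} P(τ) dτ ≤ T_δ e^{bt} and ∫_0^{t} P(τ) dτ ≤ Σ_{i : s_i < t} E_i for all t ∈ (0,D]). If both ∫_0^D a e^{bτ} P(τ) dτ < T_δ e^{bD} and ∫_0^D P(τ) dτ < Σ_{i=0}^{N} E_i, then there exists a feasible policy Q with ∫_0^D (1/2) log(1 + Q(τ)) dτ > ∫_0^D (1/2) log(1 + P(τ)) dτ; hence at the deadline of a throughput-optimal policy, the temperature constraint or the energy causality constraint (or both) must be tight. 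-/
/-!
If both constraints are slack at `D`, raising the power by a small constant `c` on a final
interval `(x, D]` after the last arrival keeps the policy feasible (the temperature budget
`Tδ e^{bt}` is continuous, the added energy and heat are `O(c)`), and it strictly increases the
throughput because `log (1 + ·)` is strictly increasing.

Since the integral of a non-integrable function is `0`, two degenerate cases need other
witnesses. If `P` is not integrable on `[0, D]`, then by monotone convergence and the energy bound
it is already not integrable on some `[0, x]` with `x < D`; every constraint integral of
`P + 1_{(x, D]}` beyond `x` is then `0`. If the throughput of `P` is not integrable, it is `0`,
and a small bump added to the zero policy beats it.
-/

open MeasureTheory Real Set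

def Feasible (a b Tδ D : ℝ) (N : ℕ) (s E : Fin (N + 1) → ℝ) (Q : ℝ → ℝ) : Prop :=
  (∀ t ∈ Set.Icc (0:ℝ) D, 0 ≤ Q t) ∧ Measurable Q ∧
  (∀ t ∈ Set.Ioc (0:ℝ) D,
    (∫ τ in (0:ℝ)..t, a * Real.exp (b * τ) * Q τ) ≤ Tδ * Real.exp (b * t)) ∧
  (∀ t ∈ Set.Ioc (0:ℝ) D,
    (∫ τ in (0:ℝ)..t, Q τ) ≤ ∑ i ∈ Finset.univ.filter (fun i => s i < t), E i)

open Filter Topology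

theorem log_one_add_add_le {p q : ℝ} (hp : 0 ≤ p) (hq : 0 ≤ q) :
    log (1 + (p + q)) ≤ log (1 + p) + log (1 + q) := by
  rw [← log_mul (by positivity) (by positivity)]
  exact log_le_log (by positivity) (by nlinarith)

theorem add_mul_indicator_Ioc_of_le (P : ℝ → ℝ) {c x D τ : ℝ} (hτ : τ ≤ x) :
    P τ + c * (Ioc x D).indicator 1 τ = P τ := by
  rw [indicator_of_notMem fun h => (not_lt.2 hτ) h.1, mul_zero, add_zero]

theorem IntervalIntegrable.of_continuousOn_mul {f g : ℝ → ℝ} {a b : ℝ}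
    (h : IntervalIntegrable (fun x => g x * f x) volume a b) (hg : ContinuousOn g (uIcc a b))
    (hg0 : ∀ x ∈ uIcc a b, g x ≠ 0) : IntervalIntegrable f volume a b :=
  (h.continuousOn_mul (hg.inv₀ hg0)).congr fun x hx =>
    inv_mul_cancel_left₀ (hg0 x (uIoc_subset_uIcc hx)) (f x)

theorem intervalIntegral.integral_eq_zero_of_eqOn_of_not_intervalIntegrable {f g : ℝ → ℝ}
    {a t₁ t : ℝ} (ht₁ : a ≤ t₁) (ht : t₁ ≤ t) (hfg : EqOn f g (Icc a t₁))
    (hf : ¬ IntervalIntegrable f volume a t₁) : ∫ τ in a..t, g τ = 0 := by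
  refine intervalIntegral.integral_undef fun hg => hf ?_
  have hsub : uIcc a t₁ ⊆ uIcc a t := by
    rw [uIcc_of_le ht₁, uIcc_of_le (ht₁.trans ht)]
    exact Icc_subset_Icc_right ht
  exact (hg.mono_set hsub).congr (hfg.symm.mono (uIoc_of_le ht₁ ▸ Ioc_subset_Icc_self))

theorem intervalIntegrable_of_forall_lt {f : ℝ → ℝ} {a D B : ℝ} (hD : a < D)
    (hf : ∀ τ ∈ Ioc a D, 0 ≤ f τ) (hfi : ∀ t ∈ Ioo a D, IntervalIntegrable f volume a t)
    (hB : ∀ t ∈ Ioo a D, ∫ τ in a..t, f τ ≤ B) : IntervalIntegrable f volume a D := by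
  set t : ℕ → ℝ := fun n => D - (D - a) / (n + 2)
  have ht : ∀ n, t n ∈ Ioo a D := fun n => by
    have hn : (1 : ℝ) < n + 2 := by linarith [n.cast_nonneg (α := ℝ)]
    exact ⟨by linarith [div_lt_self (sub_pos.2 hD) hn],
      sub_lt_self D (div_pos (sub_pos.2 hD) (by linarith))⟩
  have hlim : Tendsto t atTop (𝓝 D) := by
    have h := (tendsto_const_div_atTop_nhds_zero_nat (D - a)).comp (tendsto_add_atTop_nat 2)
    simpa [t, Function.comp_def, add_comm] using (tendsto_const_nhds (x := D)).sub h
  rw [intervalIntegrable_iff_integrableOn_Ioc_of_le hD.le]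
  refine integrableOn_Ioc_of_intervalIntegral_norm_bounded (l := atTop) (b := t) (I := B)
    (fun n => (intervalIntegrable_iff_integrableOn_Ioc_of_le (ht n).1.le).1 (hfi _ (ht n)))
    tendsto_const_nhds hlim (Eventually.of_forall fun n => ?_)
  have hnorm : EqOn (fun τ => ‖f τ‖) f (Ioc a (t n)) := fun τ hτ =>
    norm_of_nonneg (hf τ ⟨hτ.1, hτ.2.trans (ht n).2.le⟩)
  rw [setIntegral_congr_fun measurableSet_Ioc hnorm, ← intervalIntegral.integral_of_le (ht n).1.le]
  exact hB _ (ht n)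

theorem exists_pos_add_mul_lt {u₁ u₂ v₁ v₂ : ℝ} (h₁ : u₁ < v₁) (h₂ : u₂ < v₂) (K₁ K₂ : ℝ) :
    ∃ c > 0, u₁ + c * K₁ < v₁ ∧ u₂ + c * K₂ < v₂ := by
  have hnear : ∀ᶠ c in 𝓝 (0:ℝ), u₁ + c * K₁ < v₁ ∧ u₂ + c * K₂ < v₂ :=
    (((by fun_prop : Continuous fun c : ℝ => u₁ + c * K₁).tendsto' 0 u₁ (by simp)).eventually
      (gt_mem_nhds h₁)).and
    (((by fun_prop : Continuous fun c : ℝ => u₂ + c * K₂).tendsto' 0 u₂ (by simp)).eventually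
      (gt_mem_nhds h₂))
  exact (Eventually.and (self_mem_nhdsWithin (s := Ioi (0:ℝ)))
    (hnear.filter_mono nhdsWithin_le_nhds)).exists

theorem intervalIntegral.integral_add_const_mul_le {f g : ℝ → ℝ} {c t D : ℝ}
    (hf : ∀ τ ∈ Ioc 0 D, 0 ≤ f τ) (hg : ∀ τ ∈ Ioc 0 D, 0 ≤ g τ)
    (hfi : IntervalIntegrable f volume 0 D) (hgi : IntervalIntegrable g volume 0 D) (hc : 0 ≤ c)
    (ht : 0 ≤ t) (htD : t ≤ D) :
    ∫ τ in (0:ℝ)..t, (f τ + c * g τ) ≤ (∫ τ in (0:ℝ)..D, f τ) + c * ∫ τ in (0:ℝ)..D, g τ := by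
  rw [← intervalIntegral.integral_const_mul, ← intervalIntegral.integral_add hfi (hgi.const_mul c)]
  exact intervalIntegral.integral_mono_interval le_rfl ht htD
    (ae_restrict_of_forall_mem measurableSet_Ioc fun τ hτ =>
      add_nonneg (hf τ hτ) (mul_nonneg hc (hg τ hτ)))
    (hfi.add (hgi.const_mul c))

theorem integral_log_one_add_lt_add_mul_indicator {P : ℝ → ℝ} {x D c : ℝ} (hPm : Measurable P)
    (hP : ∀ τ ∈ Ioc 0 D, 0 ≤ P τ)
    (hlog : IntervalIntegrable (fun τ => 1 / 2 * log (1 + P τ)) volume 0 D)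
    (hx : 0 ≤ x) (hxD : x < D) (hc : 0 < c) :
    ∫ τ in (0:ℝ)..D, 1 / 2 * log (1 + P τ) <
      ∫ τ in (0:ℝ)..D, 1 / 2 * log (1 + (P τ + c * (Ioc x D).indicator 1 τ)) := by
  set χ : ℝ → ℝ := (Ioc x D).indicator 1
  have hχ : ∀ τ, 0 ≤ χ τ ∧ χ τ ≤ 1 := fun τ => by
    by_cases hτ : τ ∈ Ioc x D <;> simp [χ, hτ]
  have hχm : Measurable χ := measurable_one.indicator measurableSet_Ioc
  have hle : ∀ τ ∈ Ioc 0 D, log (1 + P τ) ≤ log (1 + (P τ + c * χ τ)) := fun τ hτ =>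
    log_le_log (by linarith [hP τ hτ]) (by nlinarith [hP τ hτ, hχ τ])
  -- the gain is at most `log (1 + c) / 2`, so the new throughput is integrable
  have hgi : IntervalIntegrable (fun τ => 1 / 2 * log (1 + (P τ + c * χ τ))) volume 0 D := by
    rw [intervalIntegrable_iff_integrableOn_Ioc_of_le (hxD.le.trans' hx)] at hlog ⊢
    refine (hlog.add (integrableOn_const measure_Ioc_lt_top.ne (C := 1 / 2 * log (1 + c)))).mono'
      (Measurable.aestronglyMeasurable (by fun_prop)) (ae_restrict_of_forall_mem measurableSet_Ioc
        fun τ hτ => ?_)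
    have hsub := log_one_add_add_le (hP τ hτ) (mul_nonneg hc.le (hχ τ).1)
    have hcχ : log (1 + c * χ τ) ≤ log (1 + c) :=
      log_le_log (by nlinarith [hχ τ]) (by nlinarith [hχ τ])
    have := hle τ hτ
    have := log_nonneg (by linarith [hP τ hτ] : 1 ≤ 1 + P τ)
    rw [norm_of_nonneg (by linarith), Pi.add_apply]
    linarith
  refine intervalIntegral.integral_lt_integral_of_ae_le_of_measure_setOfPred_lt_ne_zero
    (hxD.le.trans' hx) hlog hgi (ae_restrict_of_forall_mem measurableSet_Ioc fun τ hτ => ?_) ?_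
  · linarith [hle τ hτ]
  · refine fun h => (measure_mono_null (s := Ioc x D) (fun τ hτ => ?_) h).not_gt ?_
    · have hχτ : χ τ = 1 := indicator_of_mem hτ 1
      have := hP τ ⟨hx.trans_lt hτ.1, hτ.2⟩
      show 1 / 2 * log (1 + P τ) < 1 / 2 * log (1 + (P τ + c * χ τ))
      rw [hχτ, mul_one]
      gcongr
      linarith
    · rw [Measure.restrict_apply measurableSet_Ioc, inter_eq_left.2 (Ioc_subset_Ioc_left hx),
        Real.volume_Ioc, ENNReal.ofReal_pos, sub_pos]
      exact hxD

namespace Feasible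

variable {a b Tδ D : ℝ} {N : ℕ} {s E : Fin (N + 1) → ℝ} {P : ℝ → ℝ}

theorem zero (hTδ : 0 ≤ Tδ) (hE : ∀ i, 0 ≤ E i) : Feasible a b Tδ D N s E 0 :=
  ⟨fun _ _ => le_rfl, measurable_const, fun t _ => by simp; positivity,
    fun t _ => by simpa using Finset.sum_nonneg fun i _ => hE i⟩

theorem add_mul_indicator {x c : ℝ} (hP : Feasible a b Tδ D N s E P) (hc : 0 ≤ c)
    (htemp : ∀ t ∈ Ioc x D, ∫ τ in (0:ℝ)..t, a * exp (b * τ) * (P τ + c * (Ioc x D).indicator 1 τ)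
      ≤ Tδ * exp (b * t))
    (henergy : ∀ t ∈ Ioc x D, ∫ τ in (0:ℝ)..t, (P τ + c * (Ioc x D).indicator 1 τ)
      ≤ ∑ i ∈ Finset.univ.filter (fun i => s i < t), E i) :
    Feasible a b Tδ D N s E (fun τ => P τ + c * (Ioc x D).indicator 1 τ) := by
  obtain ⟨hnn, hm, hPtemp, hPenergy⟩ := hP
  have hle : ∀ t ∈ Ioc 0 D, t ≤ x → ∀ τ ∈ uIcc 0 t, P τ + c * (Ioc x D).indicator 1 τ = P τ :=
    fun t ht htx τ hτ => add_mul_indicator_Ioc_of_le P ((uIcc_of_le ht.1.le ▸ hτ).2.trans htx)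
  refine ⟨fun t ht => add_nonneg (hnn t ht) (mul_nonneg hc (indicator_nonneg (by simp) t)),
    hm.add (measurable_const.mul (measurable_one.indicator measurableSet_Ioc)),
    fun t ht => ?_, fun t ht => ?_⟩
  · rcases le_or_gt t x with htx | htx
    · rw [intervalIntegral.integral_congr (g := fun τ => a * exp (b * τ) * P τ)
        fun τ hτ => by simp only [hle t ht htx τ hτ]]
      exact hPtemp t ht
    · exact htemp t ⟨htx, ht.2⟩
  · rcases le_or_gt t x with htx | htx
    · rw [intervalIntegral.integral_congr (hle t ht htx)]
      exact hPenergy t ht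
    · exact henergy t ⟨htx, ht.2⟩

theorem add_mul_indicator_of_not_intervalIntegrable {x c : ℝ} (ha : a ≠ 0) (hTδ : 0 ≤ Tδ)
    (hE : ∀ i, 0 ≤ E i) (hP : Feasible a b Tδ D N s E P) (hx : 0 ≤ x)
    (hPx : ¬ IntervalIntegrable P volume 0 x) (hc : 0 ≤ c) :
    Feasible a b Tδ D N s E (fun τ => P τ + c * (Ioc x D).indicator 1 τ) := by
  have hQ : EqOn P (fun τ => P τ + c * (Ioc x D).indicator 1 τ) (Icc 0 x) :=
    fun τ hτ => (add_mul_indicator_Ioc_of_le P hτ.2).symm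
  refine hP.add_mul_indicator hc (fun t ht => ?_) (fun t ht => ?_)
  · have hwPx : ¬ IntervalIntegrable (fun τ => a * exp (b * τ) * P τ) volume 0 x :=
      fun h => hPx (h.of_continuousOn_mul (by fun_prop) fun τ _ => mul_ne_zero ha (exp_ne_zero _))
    rw [intervalIntegral.integral_eq_zero_of_eqOn_of_not_intervalIntegrable hx ht.1.le
      (fun τ hτ => by simp only [← hQ hτ]) hwPx]
    positivity
  · rw [intervalIntegral.integral_eq_zero_of_eqOn_of_not_intervalIntegrable hx ht.1.le hQ hPx]
    exact Finset.sum_nonneg fun i _ => hE i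

theorem exists_add_mul_indicator (ha : 0 ≤ a) (hb : 0 ≤ b) (hTδ : 0 ≤ Tδ) (hD : 0 < D)
    (hsD : ∀ i, s i < D) (hP : Feasible a b Tδ D N s E P) (hPi : IntervalIntegrable P volume 0 D)
    (htemp : ∫ τ in (0:ℝ)..D, a * exp (b * τ) * P τ < Tδ * exp (b * D))
    (henergy : ∫ τ in (0:ℝ)..D, P τ < ∑ i, E i) :
    ∃ x c : ℝ, 0 < x ∧ x < D ∧ 0 < c ∧
      Feasible a b Tδ D N s E (fun τ => P τ + c * (Ioc x D).indicator 1 τ) := by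
  obtain ⟨x, ⟨hx, hsx, hxT⟩, hxD⟩ : ∃ x, (0 < x ∧ (∀ i, s i < x) ∧
      ∫ τ in (0:ℝ)..D, a * exp (b * τ) * P τ < Tδ * exp (b * x)) ∧ x < D := by
    have hnear : ∀ᶠ x in 𝓝 D, 0 < x ∧ (∀ i, s i < x) ∧
        ∫ τ in (0:ℝ)..D, a * exp (b * τ) * P τ < Tδ * exp (b * x) :=
      (eventually_gt_nhds hD).and ((eventually_all.2 fun i => eventually_gt_nhds (hsD i)).and
        (((by fun_prop : Continuous fun x => Tδ * exp (b * x)).tendsto D).eventually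
          (lt_mem_nhds htemp)))
    exact ((hnear.filter_mono nhdsWithin_le_nhds).and (self_mem_nhdsWithin (s := Iio D))).exists
  set χ : ℝ → ℝ := (Ioc x D).indicator 1
  have hχ : ∀ τ ∈ Ioc 0 D, 0 ≤ χ τ := fun τ _ => indicator_nonneg (by simp) τ
  have hχi : IntervalIntegrable χ volume 0 D := by
    rw [intervalIntegrable_iff_integrableOn_Ioc_of_le hD.le]
    exact (integrableOn_const measure_Ioc_lt_top.ne).indicator measurableSet_Ioc
  have hw : ContinuousOn (fun τ => a * exp (b * τ)) (uIcc 0 D) := by fun_prop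
  have hw0 : ∀ τ ∈ Ioc 0 D, 0 ≤ a * exp (b * τ) := fun τ _ => by positivity
  have hPnn : ∀ τ ∈ Ioc 0 D, 0 ≤ P τ := fun τ hτ => hP.1 τ (Ioc_subset_Icc_self hτ)
  obtain ⟨c, hc, hcT, hcE⟩ := exists_pos_add_mul_lt hxT henergy
    (K₁ := ∫ τ in (0:ℝ)..D, a * exp (b * τ) * χ τ) (K₂ := ∫ τ in (0:ℝ)..D, χ τ)
  refine ⟨x, c, hx, hxD, hc, hP.add_mul_indicator hc.le (fun t ht => ?_) (fun t ht => ?_)⟩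
  · have hsplit : ∀ τ, a * exp (b * τ) * (P τ + c * χ τ)
        = a * exp (b * τ) * P τ + c * (a * exp (b * τ) * χ τ) := fun τ => by ring
    rw [intervalIntegral.integral_congr fun τ _ => hsplit τ]
    refine (intervalIntegral.integral_add_const_mul_le
      (fun τ hτ => mul_nonneg (hw0 τ hτ) (hPnn τ hτ)) (fun τ hτ => mul_nonneg (hw0 τ hτ) (hχ τ hτ))
      (hPi.continuousOn_mul hw) (hχi.continuousOn_mul hw) hc.le (hx.trans ht.1).le ht.2).trans
      (hcT.le.trans ?_)
    gcongr
    exact ht.1.le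
  · rw [Finset.filter_true_of_mem fun i _ => (hsx i).trans ht.1]
    exact (intervalIntegral.integral_add_const_mul_le hPnn hχ hPi hχi hc.le (hx.trans ht.1).le
      ht.2).trans hcE.le

end Feasible

theorem stmt_11_general (a b Tδ D : ℝ) (N : ℕ) (s E : Fin (N + 1) → ℝ)
    (ha : 0 < a) (hb : 0 < b) (hTδ : 0 < Tδ) (hD : 0 < D)
    (hsD : ∀ i, s i < D)
    (hE : ∀ i, 0 ≤ E i)
    (P : ℝ → ℝ) (hP : Feasible a b Tδ D N s E P)
    (htemp : (∫ τ in (0:ℝ)..D, a * Real.exp (b * τ) * P τ) < Tδ * Real.exp (b * D))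
    (henergy : (∫ τ in (0:ℝ)..D, P τ) < ∑ i, E i) :
    (∃ Q : ℝ → ℝ, Feasible a b Tδ D N s E Q ∧
      (∫ τ in (0:ℝ)..D, (1/2) * Real.log (1 + P τ)) <
        (∫ τ in (0:ℝ)..D, (1/2) * Real.log (1 + Q τ))) ∧
    ¬ ∀ Q : ℝ → ℝ, Feasible a b Tδ D N s E Q →
      (∫ τ in (0:ℝ)..D, (1/2) * Real.log (1 + Q τ)) ≤
        (∫ τ in (0:ℝ)..D, (1/2) * Real.log (1 + P τ)) := by
  suffices h : ∃ Q : ℝ → ℝ, Feasible a b Tδ D N s E Q ∧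
      (∫ τ in (0:ℝ)..D, (1/2) * log (1 + P τ)) < ∫ τ in (0:ℝ)..D, (1/2) * log (1 + Q τ) from
    ⟨h, fun hall => h.elim fun Q ⟨hQ, hlt⟩ => (hall Q hQ).not_gt hlt⟩
  have hPnn : ∀ τ ∈ Ioc 0 D, 0 ≤ P τ := fun τ hτ => hP.1 τ (Ioc_subset_Icc_self hτ)
  by_cases hlog : IntervalIntegrable (fun τ => 1 / 2 * log (1 + P τ)) volume 0 D
  · by_cases hPi : IntervalIntegrable P volume 0 D
    · obtain ⟨x, c, hx, hxD, hc, hQ⟩ :=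
        hP.exists_add_mul_indicator ha.le hb.le hTδ.le hD hsD hPi htemp henergy
      exact ⟨_, hQ, integral_log_one_add_lt_add_mul_indicator hP.2.1 hPnn hlog hx.le hxD hc⟩
    · obtain ⟨x, hx, hPx⟩ : ∃ x ∈ Ioo 0 D, ¬ IntervalIntegrable P volume 0 x := by
        by_contra! h
        refine hPi (intervalIntegrable_of_forall_lt (B := ∑ i, E i) hD hPnn h fun t ht => ?_)
        exact (hP.2.2.2 t ⟨ht.1, ht.2.le⟩).trans
          (Finset.sum_le_sum_of_subset_of_nonneg (Finset.filter_subset _ _) fun i _ _ => hE i)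
      exact ⟨_, hP.add_mul_indicator_of_not_intervalIntegrable ha.ne' hTδ.le hE hx.1.le hPx
        zero_le_one,
        integral_log_one_add_lt_add_mul_indicator hP.2.1 hPnn hlog hx.1.le hx.2 one_pos⟩
  · obtain ⟨x, c, hx, hxD, hc, hQ⟩ := (Feasible.zero hTδ.le hE).exists_add_mul_indicator ha.le hb.le
      hTδ.le hD hsD intervalIntegrable_const (by simpa using by positivity)
      (by simpa using (intervalIntegral.integral_nonneg hD.le hP.1).trans_lt henergy)
    refine ⟨_, hQ, ?_⟩
    rw [intervalIntegral.integral_undef hlog]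
    simpa using integral_log_one_add_lt_add_mul_indicator (P := 0) measurable_const
      (fun _ _ => le_rfl) (by simp) hx.le hxD hc

theorem stmt_11 (a b Tδ D : ℝ) (N : ℕ) (s E : Fin (N + 1) → ℝ)
    (ha : 0 < a) (hb : 0 < b) (hTδ : 0 < Tδ) (hD : 0 < D)
    (hs0 : s 0 = 0) (hsmono : StrictMono s) (hsD : ∀ i, s i < D)
    (hE : ∀ i, 0 ≤ E i)
    (P : ℝ → ℝ) (hP : Feasible a b Tδ D N s E P)
    (htemp : (∫ τ in (0:ℝ)..D, a * Real.exp (b * τ) * P τ) < Tδ * Real.exp (b * D))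
    (henergy : (∫ τ in (0:ℝ)..D, P τ) < ∑ i, E i) :
    (∃ Q : ℝ → ℝ, Feasible a b Tδ D N s E Q ∧
      (∫ τ in (0:ℝ)..D, (1/2) * Real.log (1 + P τ)) <
        (∫ τ in (0:ℝ)..D, (1/2) * Real.log (1 + Q τ))) ∧
    ¬ ∀ Q : ℝ → ℝ, Feasible a b Tδ D N s E Q →
      (∫ τ in (0:ℝ)..D, (1/2) * Real.log (1 + Q τ)) ≤
        (∫ τ in (0:ℝ)..D, (1/2) * Real.log (1 + P τ)) :=
  stmt_11_general a b Tδ D N s E ha hb hTδ hD hsD hE P hP htemp henergy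
end

section
/- Let a > 0, b > 0, Te ∈ ℝ, Tc > Te, T_δ := Tc − Te, and u < s. Suppose T : [u,s] → ℝ is differentiable with T'(t) = a·P(t) − b·(T(t) − Te) on [u,s], where P(t) ≤ T_δ·b/a for all t ∈ [u,s], and suppose T(u) < Tc. Then Tc − T(t) ≥ (Tc − T(u))·e^{-b(t-u)} for all t ∈ [u,s]; in particular T(t) < Tc for all t ∈ [u,s]. -/
/-!
Put `f := Tc - T`, the margin to the critical temperature. Since `a * P ≤ b * (Tc - Te)`, the
model gives `f' = b * (Tc - Te) - a * P - b * f ≥ -b * f`, and the comparison (Grönwall)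
inequality for this linear differential inequality yields `f t ≥ f u * exp (-b * (t - u))`,
which is positive.
-/

open Real Set

theorem mul_exp_le_of_mul_le_deriv_right {f f' : ℝ → ℝ} {K a b : ℝ}
    (hf : ContinuousOn f (Icc a b)) (hf' : ∀ x ∈ Ico a b, HasDerivWithinAt f (f' x) (Ici x) x)
    (bound : ∀ x ∈ Ico a b, K * f x ≤ f' x) :
    ∀ x ∈ Icc a b, f a * exp (K * (x - a)) ≤ f x := by
  intro x hx
  have key := le_gronwallBound_of_liminf_deriv_right_le (f := fun y => -f y) (f' := fun y => -f' y)
    (δ := -f a) (K := K) (ε := 0) hf.neg (fun y hy _ hr => (hf' y hy).neg.liminf_right_slope_le hr)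
    le_rfl (fun y hy => by linarith [bound y hy]) x hx
  rw [gronwallBound_ε0] at key
  linarith

theorem stmt_14_general (a b Te Tc u s : ℝ) (ha : 0 < a)
    (P T : ℝ → ℝ)
    (hT : ∀ t ∈ Set.Icc u s, HasDerivAt T (a * P t - b * (T t - Te)) t)
    (hP : ∀ t ∈ Set.Icc u s, P t ≤ (Tc - Te) * b / a)
    (hTu : T u < Tc) :
    ∀ t ∈ Set.Icc u s,
      (Tc - T u) * Real.exp (-b * (t - u)) ≤ Tc - T t ∧ T t < Tc := by
  have hmargin : ∀ t ∈ Icc u s, HasDerivAt (fun t => Tc - T t) (-(a * P t - b * (T t - Te))) t :=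
    fun t ht => (hT t ht).const_sub Tc
  have hbound : ∀ t ∈ Ico u s, -b * (Tc - T t) ≤ -(a * P t - b * (T t - Te)) := by
    intro t ht
    have hpower : a * P t ≤ (Tc - Te) * b := (le_div_iff₀' ha).mp (hP t (Ico_subset_Icc_self ht))
    linarith
  intro t ht
  have hlower := mul_exp_le_of_mul_le_deriv_right
    (fun t ht => (hmargin t ht).continuousAt.continuousWithinAt)
    (fun t ht => (hmargin t (Ico_subset_Icc_self ht)).hasDerivWithinAt) hbound t ht
  have hpos : 0 < (Tc - T u) * exp (-b * (t - u)) := mul_pos (by linarith) (exp_pos _)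
  exact ⟨hlower, by linarith⟩

theorem stmt_14 (a b Te Tc u s : ℝ) (ha : 0 < a) (hb : 0 < b) (hTc : Te < Tc) (hus : u < s)
    (P T : ℝ → ℝ)
    (hT : ∀ t ∈ Set.Icc u s, HasDerivAt T (a * P t - b * (T t - Te)) t)
    (hP : ∀ t ∈ Set.Icc u s, P t ≤ (Tc - Te) * b / a)
    (hTu : T u < Tc) :
    ∀ t ∈ Set.Icc u s,
      (Tc - T u) * Real.exp (-b * (t - u)) ≤ Tc - T t ∧ T t < Tc :=
  stmt_14_general a b Te Tc u s ha P T hT hP hTu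
end

section
/- Let a > 0, b > 0, Te ∈ ℝ, β > 0, C > 0, and t1 < t2. Suppose P(t) = 1/(β + C e^{bt}) − 1 for t ∈ [t1,t2], and suppose T : [t1,t2] → ℝ is differentiable with T'(t) = a·P(t) − b·(T(t) − Te) on [t1,t2]. Then for every t ∈ [t1,t2]: T(t) = (a/(bC))·e^{-bt}·ln( (β + C e^{bt}) / (β + C e^{b t1}) ) + (T(t1) − Te + a/b)·e^{-b(t - t1)} + Te − a/b. -/
/-!
Multiplying by the integrating factor `exp (b t)` turns the linear equation
`y' = g - b y` for `y = T - Te + a / b` into `(exp (b t) y)' = exp (b t) g`, and for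
`g = a / (β + C exp (b t))` the right-hand side has the explicit primitive
`(a / (b C)) log (β + C exp (b t))`.
-/

open Real Set

theorem hasDerivAt_exp_const_mul (b t : ℝ) :
    HasDerivAt (fun t => exp (b * t)) (exp (b * t) * b) t := by
  simpa using ((hasDerivAt_id t).const_mul b).exp

theorem eq_exp_mul_sub_add_of_hasDerivAt {b t1 t2 : ℝ} {y g F : ℝ → ℝ}
    (hy : ∀ t ∈ Icc t1 t2, HasDerivAt y (g t - b * y t) t)
    (hF : ∀ t ∈ Icc t1 t2, HasDerivAt F (exp (b * t) * g t) t) :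
    ∀ t ∈ Icc t1 t2, y t = exp (-b * t) * (F t - F t1) + exp (-b * (t - t1)) * y t1 := by
  set H : ℝ → ℝ := fun t => exp (b * t) * y t - F t
  have hH : ∀ t ∈ Icc t1 t2, HasDerivAt H 0 t := fun t ht => by
    refine (((hasDerivAt_exp_const_mul b t).mul (hy t ht)).sub (hF t ht)).congr_deriv ?_
    ring
  have hconst := constant_of_has_deriv_right_zero
    (fun t ht => (hH t ht).continuousAt.continuousWithinAt)
    (fun t ht => (hH t (Ico_subset_Icc_self ht)).hasDerivWithinAt)
  intro t ht
  have h := hconst t ht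
  simp only [H] at h
  have hsplit : exp (-b * (t - t1)) = exp (-b * t) * exp (b * t1) := by
    rw [← exp_add]; ring_nf
  have hinv : exp (-b * t) * exp (b * t) = 1 := by
    rw [← exp_add]; simp
  rw [hsplit]
  linear_combination exp (-b * t) * h - y t * hinv

theorem hasDerivAt_log_add_mul_exp {β C b : ℝ} (t : ℝ) (h : β + C * exp (b * t) ≠ 0) :
    HasDerivAt (fun t => log (β + C * exp (b * t)))
      (C * (exp (b * t) * b) / (β + C * exp (b * t))) t := by
  simpa using (((hasDerivAt_exp_const_mul b t).const_mul C).const_add β).log h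

theorem stmt_15_general (a b Te β C t1 t2 : ℝ) (hb : 0 < b)
    (hβ : 0 < β) (hC : 0 < C)
    (P T : ℝ → ℝ)
    (hP : ∀ t ∈ Set.Icc t1 t2, P t = 1 / (β + C * Real.exp (b * t)) - 1)
    (hT : ∀ t ∈ Set.Icc t1 t2, HasDerivAt T (a * P t - b * (T t - Te)) t) :
    ∀ t ∈ Set.Icc t1 t2,
      T t = (a / (b * C)) * Real.exp (-b * t) *
          Real.log ((β + C * Real.exp (b * t)) / (β + C * Real.exp (b * t1))) +
        (T t1 - Te + a / b) * Real.exp (-b * (t - t1)) + Te - a / b := by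
  have hpos : ∀ t, 0 < β + C * exp (b * t) := fun t => by positivity
  have hy : ∀ t ∈ Icc t1 t2, HasDerivAt (fun t => T t - Te + a / b)
      (a / (β + C * exp (b * t)) - b * (T t - Te + a / b)) t := fun t ht => by
    refine (((hT t ht).sub_const Te).add_const (a / b)).congr_deriv ?_
    rw [hP t ht]
    field_simp
    ring
  have hF : ∀ t ∈ Icc t1 t2, HasDerivAt (fun t => a / (b * C) * log (β + C * exp (b * t)))
      (exp (b * t) * (a / (β + C * exp (b * t)))) t := fun t _ => by
    refine ((hasDerivAt_log_add_mul_exp t (hpos t).ne').const_mul (a / (b * C))).congr_deriv ?_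
    field_simp
  intro t ht
  have h := eq_exp_mul_sub_add_of_hasDerivAt hy hF t ht
  rw [log_div (hpos t).ne' (hpos t1).ne']
  linear_combination h

theorem stmt_15 (a b Te β C t1 t2 : ℝ) (ha : 0 < a) (hb : 0 < b)
    (hβ : 0 < β) (hC : 0 < C) (h12 : t1 < t2)
    (P T : ℝ → ℝ)
    (hP : ∀ t ∈ Set.Icc t1 t2, P t = 1 / (β + C * Real.exp (b * t)) - 1)
    (hT : ∀ t ∈ Set.Icc t1 t2, HasDerivAt T (a * P t - b * (T t - Te)) t) :
    ∀ t ∈ Set.Icc t1 t2,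
      T t = (a / (b * C)) * Real.exp (-b * t) *
          Real.log ((β + C * Real.exp (b * t)) / (β + C * Real.exp (b * t1))) +
        (T t1 - Te + a / b) * Real.exp (-b * (t - t1)) + Te - a / b :=
  stmt_15_general a b Te β C t1 t2 hb hβ hC P T hP hT
end

section
/- Let a > 0, b > 0, Te ∈ ℝ, β > 0, C > 0, and t1 < t2. Suppose P(t) = max{ 1/(β + C e^{bt}) − 1, 0 } for t ∈ [t1,t2], and suppose T : [t1,t2] → ℝ is differentiable with T'(t) = a·P(t) − b·(T(t) − Te) on [t1,t2] and T(t1) ≥ Te. Then T is unimodal on [t1,t2]: there exists t* ∈ [t1,t2] such that T is monotone nondecreasing on [t1, t*] and monotone nonincreasing on [t*, t2]. -/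
open MeasureTheory Real Set

theorem stmt_17 (a b Te β C t1 t2 : ℝ) (ha : 0 < a) (hb : 0 < b)
    (hβ : 0 < β) (hC : 0 < C) (h12 : t1 < t2)
    (P T : ℝ → ℝ)
    (hP : ∀ t ∈ Set.Icc t1 t2, P t = max (1 / (β + C * Real.exp (b * t)) - 1) 0)
    (hT : ∀ t ∈ Set.Icc t1 t2, HasDerivAt T (a * P t - b * (T t - Te)) t)
    (hT1 : Te ≤ T t1) :
    ∃ tstar ∈ Set.Icc t1 t2,
      MonotoneOn T (Set.Icc t1 tstar) ∧ AntitoneOn T (Set.Icc tstar t2) := by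
  set D : ℝ → ℝ := fun t => a * P t - b * (T t - Te) with hDdef
  -- continuity of T on Icc
  have hTc : ContinuousOn T (Set.Icc t1 t2) := fun t ht =>
    ((hT t ht).differentiableAt.continuousAt).continuousWithinAt
  have hden : ∀ t : ℝ, 0 < β + C * Real.exp (b * t) := fun t => by positivity
  have hPc : ContinuousOn P (Set.Icc t1 t2) := by
    have hcont : Continuous fun t => max (1 / (β + C * Real.exp (b * t)) - 1) 0 := by
      apply Continuous.max _ continuous_const
      apply Continuous.sub _ continuous_const
      exact Continuous.div continuous_const (by continuity) (fun t => ne_of_gt (hden t))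
    exact hcont.continuousOn.congr hP
  have hDc : ContinuousOn D (Set.Icc t1 t2) :=
    (continuousOn_const.mul hPc).sub (continuousOn_const.mul (hTc.sub continuousOn_const))
  -- P is antitone on Icc
  have hPanti : ∀ s ∈ Set.Icc t1 t2, ∀ u ∈ Set.Icc t1 t2, s ≤ u → P u ≤ P s := by
    intro s hs u hu hsu
    rw [hP s hs, hP u hu]
    have h1 : β + C * Real.exp (b * s) ≤ β + C * Real.exp (b * u) := by
      have := Real.exp_le_exp.2 (mul_le_mul_of_nonneg_left hsu hb.le)
      nlinarith
    have h2 : 1 / (β + C * Real.exp (b * u)) ≤ 1 / (β + C * Real.exp (b * s)) :=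
      one_div_le_one_div_of_le (hden s) h1
    exact max_le_max (by linarith) le_rfl
  -- key lemma: once the derivative is nonpositive it stays nonpositive
  have key : ∀ s ∈ Set.Icc t1 t2, ∀ u ∈ Set.Icc t1 t2, s ≤ u → D s ≤ 0 → D u ≤ 0 := by
    intro s hs u hu hsu hDs
    by_contra hpos
    push_neg at hpos
    have hsu' : s < u := lt_of_le_of_ne hsu (by rintro rfl; linarith)
    set K := Set.Icc s u ∩ D ⁻¹' (Set.Iic 0) with hKdef
    have hKsub : Set.Icc s u ⊆ Set.Icc t1 t2 := Set.Icc_subset_Icc hs.1 hu.2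
    have hKclosed : IsClosed K :=
      (hDc.mono hKsub).preimage_isClosed_of_isClosed isClosed_Icc isClosed_Iic
    have hKne : K.Nonempty := ⟨s, ⟨le_rfl, hsu⟩, hDs⟩
    have hKbdd : BddAbove K := ⟨u, fun t ht => ht.1.2⟩
    set v := sSup K with hvdef
    have hvK : v ∈ K := hKclosed.csSup_mem hKne hKbdd
    have hvu : v < u := lt_of_le_of_ne hvK.1.2 (by
      intro h
      have hDv := hvK.2
      rw [h] at hDv
      simp only [Set.mem_preimage, Set.mem_Iic] at hDv
      linarith)
    have hvt : v ∈ Set.Icc t1 t2 := hKsub hvK.1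
    have hmono : StrictMonoOn T (Set.Icc v u) := by
      apply strictMonoOn_of_deriv_pos (convex_Icc _ _)
        (hTc.mono (Set.Icc_subset_Icc hvt.1 hu.2))
      intro x hx
      rw [interior_Icc] at hx
      have hx2 : x ∈ Set.Icc t1 t2 := ⟨le_trans hvt.1 hx.1.le, le_trans hx.2.le hu.2⟩
      have hDx : 0 < D x := by
        by_contra h
        push_neg at h
        have hxK : x ∈ K := ⟨⟨le_trans hvK.1.1 hx.1.le, hx.2.le⟩, h⟩
        exact absurd (le_csSup hKbdd hxK) (not_le.2 hx.1)
      rw [(hT x hx2).deriv]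
      exact hDx
    have hTvu : T v < T u := hmono ⟨le_rfl, hvu.le⟩ ⟨hvu.le, le_rfl⟩ hvu
    have hPuv : P u ≤ P v := hPanti v hvt u hu hvu.le
    have hDv : D v ≤ 0 := hvK.2
    have h1 : a * P u ≤ a * P v := mul_le_mul_of_nonneg_left hPuv ha.le
    have h2 : b * (T v - Te) < b * (T u - Te) := by nlinarith
    have : D u < D v := by simp only [hDdef]; linarith
    linarith
  set A := {t | t ∈ Set.Icc t1 t2 ∧ 0 < D t} with hAdef
  by_cases hA : A.Nonempty
  · set tstar := sSup A with htsdef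
    have hAb : BddAbove A := ⟨t2, fun t ht => ht.1.2⟩
    have ht2 : tstar ≤ t2 := csSup_le hA (fun t ht => ht.1.2)
    have ht1 : t1 ≤ tstar := by
      obtain ⟨w, hw⟩ := hA
      exact le_trans hw.1.1 (le_csSup hAb hw)
    refine ⟨tstar, ⟨ht1, ht2⟩, ?_, ?_⟩
    · apply monotoneOn_of_deriv_nonneg (convex_Icc _ _)
        (hTc.mono (Set.Icc_subset_Icc le_rfl ht2))
      · intro x hx
        rw [interior_Icc] at hx
        have hx2 : x ∈ Set.Icc t1 t2 := ⟨hx.1.le, le_trans hx.2.le ht2⟩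
        exact (hT x hx2).differentiableAt.differentiableWithinAt
      · intro x hx
        rw [interior_Icc] at hx
        have hx2 : x ∈ Set.Icc t1 t2 := ⟨hx.1.le, le_trans hx.2.le ht2⟩
        obtain ⟨u, huA, hxu⟩ := exists_lt_of_lt_csSup hA hx.2
        have hDx : 0 < D x := by
          by_contra h
          push_neg at h
          have := key x hx2 u huA.1 hxu.le h
          linarith [huA.2]
        rw [(hT x hx2).deriv]
        exact hDx.le
    · apply antitoneOn_of_deriv_nonpos (convex_Icc _ _)
        (hTc.mono (Set.Icc_subset_Icc ht1 le_rfl))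
      · intro x hx
        rw [interior_Icc] at hx
        have hx2 : x ∈ Set.Icc t1 t2 := ⟨le_trans ht1 hx.1.le, hx.2.le⟩
        exact (hT x hx2).differentiableAt.differentiableWithinAt
      · intro x hx
        rw [interior_Icc] at hx
        have hx2 : x ∈ Set.Icc t1 t2 := ⟨le_trans ht1 hx.1.le, hx.2.le⟩
        have hxA : x ∉ A := fun hxA => absurd (le_csSup hAb hxA) (not_le.2 hx.1)
        have hDx : D x ≤ 0 := by
          by_contra h
          push_neg at h
          exact hxA ⟨hx2, h⟩
        rw [(hT x hx2).deriv]
        exact hDx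
  · refine ⟨t1, ⟨le_rfl, h12.le⟩, ?_, ?_⟩
    · intro x hx y hy hxy
      simp only [Set.Icc_self, Set.mem_singleton_iff] at hx hy
      subst hx; subst hy; exact le_rfl
    · apply antitoneOn_of_deriv_nonpos (convex_Icc _ _) hTc
      · intro x hx
        rw [interior_Icc] at hx
        exact (hT x ⟨hx.1.le, hx.2.le⟩).differentiableAt.differentiableWithinAt
      · intro x hx
        rw [interior_Icc] at hx
        have hx2 : x ∈ Set.Icc t1 t2 := ⟨hx.1.le, hx.2.le⟩
        have hDx : D x ≤ 0 := by
          by_contra h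
          push_neg at h
          exact hA ⟨x, hx2, h⟩
        rw [(hT x hx2).deriv]
        exact hDx
end

section
/- Let a > 0, b > 0, Te ∈ ℝ, Tc > Te, T_δ := Tc − Te, D > 0, and E ≥ 0. Suppose T : [0,D] → ℝ is differentiable with T'(t) = a·(E/D) − b·(T(t) − Te) on [0,D] and T(0) = Te (constant power policy P ≡ E/D). Then T(t) ≤ Tc for all t ∈ [0,D] if and only if E ≤ (T_δ·b/a) · (D e^{bD})/(e^{bD} − 1). -/
open MeasureTheory Real Set

/-!
With `c := a E / (b D)` the equation reads `T' = b (Te + c - T)`, so `(T t - Te - c) e^{b t}` is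
constant and `T t = Te + c (1 - e^{-b t})`. This is increasing in `t`, so `T` stays below `Tc`
on `[0, D]` iff `T D ≤ Tc`, which rearranges to the bound on `E`.
-/

theorem eq_of_hasDerivAt_relaxation {y : ℝ → ℝ} {b c D : ℝ}
    (hy : ∀ t ∈ Icc 0 D, HasDerivAt y (b * (c - y t)) t) :
    ∀ t ∈ Icc 0 D, y t = c + (y 0 - c) * exp (-(b * t)) := by
  set g : ℝ → ℝ := fun t => (y t - c) * exp (b * t)
  have hg_deriv : ∀ t ∈ Icc 0 D, HasDerivAt g 0 t := fun t ht => by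
    have hexp : HasDerivAt (fun t => exp (b * t)) (exp (b * t) * b) t :=
      ((hasDerivAt_id t).const_mul b).exp.congr_deriv (by simp)
    exact (((hy t ht).sub_const c).mul hexp).congr_deriv (by ring)
  have hg_const : ∀ t ∈ Icc 0 D, g t = g 0 := fun t ht =>
    constant_of_has_deriv_right_zero (fun s hs => (hg_deriv s hs).continuousAt.continuousWithinAt)
      (fun s hs => (hg_deriv s (Ico_subset_Icc_self hs)).hasDerivWithinAt) t ht
  intro t ht
  have h := hg_const t ht
  simp only [g, mul_zero, exp_zero, mul_one] at h
  rw [exp_neg, ← h]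
  field_simp
  ring

theorem forall_mem_Icc_le_iff_of_monotoneOn {f : ℝ → ℝ} {x y M : ℝ} (hxy : x ≤ y)
    (hf : MonotoneOn f (Icc x y)) : (∀ t ∈ Icc x y, f t ≤ M) ↔ f y ≤ M :=
  ⟨fun h => h y (right_mem_Icc.2 hxy),
    fun h _ ht => (hf ht (right_mem_Icc.2 hxy) ht.2).trans h⟩

theorem add_mul_one_sub_exp_neg_le_iff {a b Te Tc D E : ℝ} (ha : 0 < a) (hb : 0 < b)
    (hD : 0 < D) :
    Te + a * E / (b * D) * (1 - exp (-(b * D))) ≤ Tc ↔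
      E ≤ ((Tc - Te) * b / a) * (D * exp (b * D)) / (exp (b * D) - 1) := by
  have hs : 0 < exp (b * D) - 1 := sub_pos.2 (one_lt_exp_iff.2 (by positivity))
  have hfactor : 0 < a * (exp (b * D) - 1) / (b * D * exp (b * D)) := by positivity
  have key : Tc - (Te + a * E / (b * D) * (1 - exp (-(b * D)))) =
      a * (exp (b * D) - 1) / (b * D * exp (b * D)) *
        (((Tc - Te) * b / a) * (D * exp (b * D)) / (exp (b * D) - 1) - E) := by
    rw [exp_neg]
    field_simp
    ring
  rw [← sub_nonneg, key, mul_nonneg_iff_of_pos_left hfactor, sub_nonneg]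

theorem stmt_18_general (a b Te Tc D E : ℝ) (ha : 0 < a) (hb : 0 < b)
    (hD : 0 < D) (hE : 0 ≤ E)
    (T : ℝ → ℝ)
    (hT : ∀ t ∈ Set.Icc (0:ℝ) D, HasDerivAt T (a * (E / D) - b * (T t - Te)) t)
    (h0 : T 0 = Te) :
    (∀ t ∈ Set.Icc (0:ℝ) D, T t ≤ Tc) ↔
      E ≤ ((Tc - Te) * b / a) * (D * Real.exp (b * D)) / (Real.exp (b * D) - 1) := by
  set c := a * E / (b * D)
  have hT_eq : ∀ t ∈ Icc 0 D, T t = Te + c * (1 - exp (-(b * t))) := by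
    have hT' : ∀ t ∈ Icc 0 D, HasDerivAt T (b * (Te + c - T t)) t := fun t ht =>
      (hT t ht).congr_deriv (by simp only [c]; field_simp; ring)
    intro t ht
    rw [eq_of_hasDerivAt_relaxation hT' t ht, h0]
    ring
  have hmono : MonotoneOn T (Icc 0 D) := fun s hs t ht hst => by
    rw [hT_eq s hs, hT_eq t ht]
    gcongr
  rw [forall_mem_Icc_le_iff_of_monotoneOn hD.le hmono, hT_eq D (right_mem_Icc.2 hD.le)]
  exact add_mul_one_sub_exp_neg_le_iff ha hb hD

theorem stmt_18 (a b Te Tc D E : ℝ) (ha : 0 < a) (hb : 0 < b) (hTc : Te < Tc)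
    (hD : 0 < D) (hE : 0 ≤ E)
    (T : ℝ → ℝ)
    (hT : ∀ t ∈ Set.Icc (0:ℝ) D, HasDerivAt T (a * (E / D) - b * (T t - Te)) t)
    (h0 : T 0 = Te) :
    (∀ t ∈ Set.Icc (0:ℝ) D, T t ≤ Tc) ↔
      E ≤ ((Tc - Te) * b / a) * (D * Real.exp (b * D)) / (Real.exp (b * D) - 1) :=
  stmt_18_general a b Te Tc D E ha hb hD hE T hT h0
end

section
/- Let a > 0 and b > 0. For T_δ > 0 define w(t, T_δ) = (1/b)·(1 − (a/(T_δ·b + a))·e^{-bt}) − t for t ≥ 0. Then: (i) for each fixed T_δ > 0, t ↦ w(t, T_δ) is strictly decreasing on [0,∞), satisfies w(0, T_δ) > 0 and tends to −∞ as t → ∞, hence there is a unique t0(T_δ) > 0 with w(t0(T_δ), T_δ) = 0; (ii) if 0 < T_δ < T_δ', then t0(T_δ) < t0(T_δ'). -/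
/-!
With `c = a / (T_δ b + a) ∈ (0, 1)`, the function `w(t) = (1 - c e^{-bt}) / b - t` has derivative
`c e^{-bt} - 1 < 0` for `t > 0`, equals `(1 - c) / b > 0` at `0` and behaves like `-t` at infinity,
so it has exactly one positive root. Enlarging `T_δ` shrinks `c` and raises the whole graph of `w`,
which pushes the root to the right.
-/

open Real Set Filter

noncomputable def heatMargin (b c t : ℝ) : ℝ := (1 / b) * (1 - c * exp (-b * t)) - t

section HeatMargin

variable {b c : ℝ}

theorem continuous_heatMargin : Continuous (heatMargin b c) := by
  unfold heatMargin; fun_prop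

theorem hasDerivAt_heatMargin (hb : b ≠ 0) (t : ℝ) :
    HasDerivAt (heatMargin b c) (c * exp (-b * t) - 1) t := by
  have h := ((((hasDerivAt_id' t).const_mul (-b)).exp.const_mul c).const_sub 1).const_mul (1 / b)
  exact (h.sub (hasDerivAt_id' t)).congr_deriv (by field_simp)

theorem strictAntiOn_heatMargin (hb : 0 < b) (hc : c ≤ 1) :
    StrictAntiOn (heatMargin b c) (Ici 0) := by
  refine strictAntiOn_of_deriv_neg (convex_Ici 0) continuous_heatMargin.continuousOn ?_
  intro t ht
  rw [interior_Ici, mem_Ioi] at ht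
  rw [(hasDerivAt_heatMargin hb.ne' t).deriv, sub_neg]
  calc c * exp (-b * t) ≤ exp (-b * t) := mul_le_of_le_one_left (exp_pos _).le hc
    _ < 1 := exp_lt_one_iff.2 (by nlinarith)

theorem heatMargin_zero_pos (hb : 0 < b) (hc : c < 1) : 0 < heatMargin b c 0 := by
  simp only [heatMargin, mul_zero, exp_zero, mul_one, sub_zero]
  exact mul_pos (one_div_pos.2 hb) (sub_pos.2 hc)

theorem tendsto_heatMargin_atBot (hb : 0 < b) : Tendsto (heatMargin b c) atTop atBot := by
  have hexp : Tendsto (fun t => exp (-b * t)) atTop (nhds 0) :=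
    tendsto_exp_comp_nhds_zero.2 (tendsto_id.const_mul_atTop_of_neg (neg_neg_of_pos hb))
  have hconst := ((hexp.const_mul c).const_sub 1).const_mul (1 / b)
  exact (hconst.add_atBot tendsto_neg_atTop_atBot).congr fun t => (sub_eq_add_neg _ _).symm

theorem heatMargin_lt_heatMargin (hb : 0 < b) {c' : ℝ} (hc : c' < c) (t : ℝ) :
    heatMargin b c t < heatMargin b c' t := by
  unfold heatMargin
  gcongr

end HeatMargin

theorem existsUnique_pos_eq_zero_of_strictAntiOn {f : ℝ → ℝ} (hcont : ContinuousOn f (Ici 0))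
    (hanti : StrictAntiOn f (Ici 0)) (h0 : 0 < f 0) (htop : Tendsto f atTop atBot) :
    ∃! t, 0 < t ∧ f t = 0 := by
  obtain ⟨t, ht, hft⟩ := intermediate_value_Ici' hcont htop (mem_Iic.2 h0.le)
  have htpos : 0 < t := lt_of_le_of_ne ht (by rintro rfl; exact h0.ne' hft)
  exact ⟨t, ⟨htpos, hft⟩, fun s ⟨hs, hfs⟩ => hanti.injOn hs.le ht (hfs.trans hft.symm)⟩

theorem stmt_19 (a b : ℝ) (ha : 0 < a) (hb : 0 < b)
    (w : ℝ → ℝ → ℝ)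
    (hw : ∀ t Tδ : ℝ, w t Tδ =
      (1 / b) * (1 - (a / (Tδ * b + a)) * Real.exp (-b * t)) - t) :
    (∀ Tδ : ℝ, 0 < Tδ →
      StrictAntiOn (fun t => w t Tδ) (Set.Ici 0) ∧
      0 < w 0 Tδ ∧
      Filter.Tendsto (fun t => w t Tδ) Filter.atTop Filter.atBot ∧
      ∃! t0 : ℝ, 0 < t0 ∧ w t0 Tδ = 0) ∧
    (∀ Tδ Tδ' t0 t0' : ℝ, 0 < Tδ → Tδ < Tδ' →
      0 < t0 → w t0 Tδ = 0 → 0 < t0' → w t0' Tδ' = 0 → t0 < t0') := by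
  obtain rfl : w = fun t Tδ => heatMargin b (a / (Tδ * b + a)) t := funext₂ hw
  have hcoeff_lt_one (Tδ : ℝ) (hTδ : 0 < Tδ) : a / (Tδ * b + a) < 1 :=
    (div_lt_one (by positivity)).2 (lt_add_of_pos_left a (by positivity))
  have hanti (Tδ : ℝ) (hTδ : 0 < Tδ) :=
    strictAntiOn_heatMargin (c := a / (Tδ * b + a)) hb (hcoeff_lt_one Tδ hTδ).le
  refine ⟨fun Tδ hTδ => ⟨hanti Tδ hTδ, heatMargin_zero_pos hb (hcoeff_lt_one Tδ hTδ),
    tendsto_heatMargin_atBot hb, existsUnique_pos_eq_zero_of_strictAntiOn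
      continuous_heatMargin.continuousOn (hanti Tδ hTδ)
      (heatMargin_zero_pos hb (hcoeff_lt_one Tδ hTδ)) (tendsto_heatMargin_atBot hb)⟩, ?_⟩
  intro Tδ Tδ' t0 t0' hTδ hTδ' ht0 hroot ht0' hroot'
  have hcoeff : a / (Tδ' * b + a) < a / (Tδ * b + a) :=
    div_lt_div_of_pos_left ha (by positivity) (by gcongr)
  have hlt : heatMargin b (a / (Tδ * b + a)) t0' < heatMargin b (a / (Tδ * b + a)) t0 :=
    calc _ < heatMargin b (a / (Tδ' * b + a)) t0' := heatMargin_lt_heatMargin hb hcoeff t0'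
      _ = _ := hroot'.trans hroot.symm
  exact ((hanti Tδ hTδ).lt_iff_gt ht0'.le ht0.le).1 hlt
end
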